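/- Let x < a and b < 0. Then ∫_0^∞ t · (a−x)·t^{−3/2}·φ((a + bt − x)/√t) dt = (a−x)/|b|; that is, the first-passage time of Brownian motion started at x through the line a + bt has finite expectation E(τ₁) = |a−x|/|b|. -/

import Mathlib

/-!
Write `c = a - x` and let `Φ` be the standard normal CDF. On `(0, ∞)` the function
`G t = c / b * (exp (-2bc) Φ ((bt - c)/√t) + Φ ((bt + c)/√t))` is an antiderivative of the
integrand: since `exp (-2bc) φ ((bt - c)/√t) = φ ((bt + c)/√t)`, the two chain-rule terms
combine into `c φ ((bt + c)/√t) / √t`. As `t → 0⁺`, `G → c / b`, and, because `b < 0`,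
`G → 0` as `t → ∞`; so the nonnegative integrand is integrable, with integral
`0 - c / b = c / |b|`.
-/

open MeasureTheory

/-- The standard normal density `φ`. -/
noncomputable def stdPhi (z : ℝ) : ℝ := Real.exp (-z ^ 2 / 2) / Real.sqrt (2 * Real.pi)

open ProbabilityTheory Filter Set Topology Real

local notation "Φ" => cdf (gaussianReal 0 1)

lemma stdPhi_eq_gaussianPDFReal : stdPhi = gaussianPDFReal 0 1 := by
  ext z
  simp [stdPhi, gaussianPDFReal, div_eq_inv_mul]

lemma stdPhi_nonneg (z : ℝ) : 0 ≤ stdPhi z := by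
  unfold stdPhi
  positivity

lemma stdPhi_add (u v : ℝ) : stdPhi (u + v) = exp (-(2 * u * v)) * stdPhi (u - v) := by
  unfold stdPhi
  rw [mul_div_assoc', ← exp_add]
  ring_nf

lemma continuous_stdPhi : Continuous stdPhi := by
  unfold stdPhi
  fun_prop

lemma cdf_gaussianReal_eq_integral (z : ℝ) : Φ z = ∫ t in Iic z, stdPhi t := by
  rw [cdf_eq_real, measureReal_def, gaussianReal_apply_eq_integral _ one_ne_zero,
    ENNReal.toReal_ofReal (integral_nonneg (gaussianPDFReal_nonneg 0 1)), stdPhi_eq_gaussianPDFReal]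

lemma hasDerivAt_cdf_gaussianReal (z : ℝ) : HasDerivAt Φ (stdPhi z) z := by
  have hint : Integrable stdPhi := stdPhi_eq_gaussianPDFReal ▸ integrable_gaussianPDFReal 0 1
  have hcdf : Φ = fun y ↦ Φ 0 + ∫ t in 0..y, stdPhi t := by
    ext y
    rw [cdf_gaussianReal_eq_integral, cdf_gaussianReal_eq_integral,
      ← intervalIntegral.integral_Iic_sub_Iic hint.integrableOn hint.integrableOn]
    ring
  rw [hcdf]
  exact (continuous_stdPhi.integral_hasStrictDerivAt 0 z).hasDerivAt.const_add _

theorem integral_Ioi_of_hasDerivAt_of_nonneg_of_tendsto_nhdsGT {g g' : ℝ → ℝ} {a l₀ l : ℝ}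
    (h₀ : Tendsto g (𝓝[>] a) (𝓝 l₀)) (hderiv : ∀ x ∈ Ioi a, HasDerivAt g (g' x) x)
    (hg' : ∀ x ∈ Ioi a, 0 ≤ g' x) (hg : Tendsto g atTop (𝓝 l)) :
    ∫ x in Ioi a, g' x = l - l₀ := by
  classical
  have hupdate : ∀ x ≠ a, Function.update g a l₀ x = g x :=
    fun x hx ↦ Function.update_of_ne hx ..
  -- Redefining `g a` as the right limit `l₀` makes `g` continuous on `[a, ∞)`.
  convert integral_Ioi_of_hasDerivAt_of_nonneg (g := Function.update g a l₀) ?_ (fun x hx ↦ ?_)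
    hg' ?_ using 2
  · simp
  · rwa [continuousWithinAt_update_same, Ici_sdiff_left]
  · refine (hderiv x hx).congr_of_eventuallyEq ?_
    filter_upwards [eventually_ne_nhds (ne_of_gt hx)] with y hy using hupdate y hy
  · refine hg.congr' ?_
    filter_upwards [eventually_gt_atTop a] with y hy using (hupdate y hy.ne').symm

lemma hasDerivAt_linear_div_sqrt (p q : ℝ) {t : ℝ} (ht : 0 < t) :
    HasDerivAt (fun s ↦ (p * s + q) / √s) ((p * t - q) / (2 * t * √t)) t := by
  have hs : √t ≠ 0 := (sqrt_pos.mpr ht).ne'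
  refine (((hasDerivAt_id t).const_mul p |>.add_const q).div (hasDerivAt_sqrt ht.ne') hs)
    |>.congr_deriv ?_
  rw [sq_sqrt ht.le, id]
  field_simp
  linear_combination 2 * p * sq_sqrt ht.le

lemma linear_div_sqrt_eq {t : ℝ} (ht : 0 < t) (p q : ℝ) :
    (p * t + q) / √t = p * √t + q * (√t)⁻¹ := by
  field_simp
  rw [sq_sqrt ht.le]

lemma tendsto_linear_div_sqrt_atTop {p : ℝ} (hp : p < 0) (q : ℝ) :
    Tendsto (fun t ↦ (p * t + q) / √t) atTop atBot := by
  have h := (tendsto_inv_atTop_zero.comp tendsto_sqrt_atTop).const_mul q |>.add_atBot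
    (tendsto_sqrt_atTop.const_mul_atTop_of_neg hp)
  refine h.congr' ?_
  filter_upwards [eventually_gt_atTop 0] with t ht
  rw [linear_div_sqrt_eq ht, add_comm]
  rfl

lemma tendsto_linear_div_sqrt_nhdsGT_zero (p : ℝ) {q : ℝ} (hq : 0 < q) :
    Tendsto (fun t ↦ (p * t + q) / √t) (𝓝[>] 0) atTop := by
  have hnum : Tendsto (fun t ↦ p * t + q) (𝓝[>] 0) (𝓝 q) :=
    (Continuous.tendsto' (f := fun t ↦ p * t + q) (by fun_prop) 0 q (by simp)).mono_left
      nhdsWithin_le_nhds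
  have hsqrt : Tendsto (fun t ↦ (√t)⁻¹) (𝓝[>] 0) atTop := by
    refine tendsto_inv_nhdsGT_zero.comp (tendsto_nhdsWithin_iff.mpr ⟨?_, ?_⟩)
    · simpa using continuous_sqrt.tendsto' 0 0 sqrt_zero |>.mono_left nhdsWithin_le_nhds
    · filter_upwards [self_mem_nhdsWithin] with t ht using sqrt_pos.mpr ht
  exact hnum.pos_mul_atTop hq hsqrt

lemma tendsto_linear_sub_div_sqrt_nhdsGT_zero (p : ℝ) {q : ℝ} (hq : 0 < q) :
    Tendsto (fun t ↦ (p * t - q) / √t) (𝓝[>] 0) atBot := by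
  convert tendsto_neg_atTop_atBot.comp (tendsto_linear_div_sqrt_nhdsGT_zero (-p) hq)
    using 2 with t
  simp only [Function.comp_apply]
  ring

lemma exp_mul_stdPhi_sub_div_sqrt (b c : ℝ) {t : ℝ} (ht : 0 < t) :
    exp (-(2 * b * c)) * stdPhi ((b * t - c) / √t) = stdPhi ((b * t + c) / √t) := by
  have hprod : 2 * (b * √t) * (c * (√t)⁻¹) = 2 * b * c := by field_simp
  rw [linear_div_sqrt_eq ht, stdPhi_add, hprod, sub_eq_add_neg, linear_div_sqrt_eq ht, neg_mul,
    ← sub_eq_add_neg]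

lemma rpow_neg_three_halves {t : ℝ} (ht : 0 < t) : t ^ (-(3 : ℝ) / 2) = (t * √t)⁻¹ := by
  rw [show -(3 : ℝ) / 2 = -(1 + 1 / 2) by norm_num, rpow_neg ht.le, rpow_add ht, rpow_one,
    ← sqrt_eq_rpow]

noncomputable def passagePrimitive (b c t : ℝ) : ℝ :=
  c / b * (exp (-(2 * b * c)) * Φ ((b * t - c) / √t) + Φ ((b * t + c) / √t))

lemma hasDerivAt_passagePrimitive {b : ℝ} (hb : b ≠ 0) (c : ℝ) {t : ℝ} (ht : 0 < t) :
    HasDerivAt (passagePrimitive b c)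
      (t * (c * t ^ (-(3 : ℝ) / 2) * stdPhi ((b * t + c) / √t))) t := by
  have hminus : HasDerivAt (fun s ↦ (b * s - c) / √s) ((b * t + c) / (2 * t * √t)) t := by
    simpa only [← sub_eq_add_neg, sub_neg_eq_add] using hasDerivAt_linear_div_sqrt b (-c) ht
  have hplus := hasDerivAt_linear_div_sqrt b c ht
  refine ((((hasDerivAt_cdf_gaussianReal _).comp t hminus).const_mul _).add
    ((hasDerivAt_cdf_gaussianReal _).comp t hplus)).const_mul _ |>.congr_deriv ?_
  rw [← mul_assoc (exp _), exp_mul_stdPhi_sub_div_sqrt b c ht, rpow_neg_three_halves ht]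
  field_simp
  ring

lemma tendsto_passagePrimitive_nhdsGT_zero (b : ℝ) {c : ℝ} (hc : 0 < c) :
    Tendsto (passagePrimitive b c) (𝓝[>] 0) (𝓝 (c / b)) := by
  have hminus := (tendsto_cdf_atBot (gaussianReal 0 1)).comp
    (tendsto_linear_sub_div_sqrt_nhdsGT_zero b hc)
  have hplus := (tendsto_cdf_atTop (gaussianReal 0 1)).comp
    (tendsto_linear_div_sqrt_nhdsGT_zero b hc)
  have h := (hminus.const_mul (exp (-(2 * b * c)))).add hplus |>.const_mul (c / b)
  rwa [mul_zero, zero_add, mul_one] at h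

lemma tendsto_passagePrimitive_atTop {b : ℝ} (hb : b < 0) (c : ℝ) :
    Tendsto (passagePrimitive b c) atTop (𝓝 0) := by
  have hminus : Tendsto (fun t ↦ (b * t - c) / √t) atTop atBot := by
    simpa only [← sub_eq_add_neg] using tendsto_linear_div_sqrt_atTop hb (-c)
  have hΦminus := (tendsto_cdf_atBot (gaussianReal 0 1)).comp hminus
  have hΦplus := (tendsto_cdf_atBot (gaussianReal 0 1)).comp (tendsto_linear_div_sqrt_atTop hb c)
  have h := (hΦminus.const_mul (exp (-(2 * b * c)))).add hΦplus |>.const_mul (c / b)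
  rwa [mul_zero, zero_add, mul_zero] at h

/-- for `x < a` and `b < 0`, the first-passage time of Brownian motion
through the line `a + bt` has finite expectation `(a-x)/|b|`. -/
theorem stmt_10 (a x b : ℝ) (hx : x < a) (hb : b < 0) :
    (∫ t in Set.Ioi (0:ℝ),
        t * ((a - x) * t ^ (-(3:ℝ) / 2) * stdPhi ((a + b * t - x) / Real.sqrt t))) =
      (a - x) / |b| := by
  have hc : 0 < a - x := sub_pos.mpr hx
  have hderiv (t : ℝ) (ht : t ∈ Ioi 0) : HasDerivAt (passagePrimitive b (a - x))
      (t * ((a - x) * t ^ (-(3:ℝ) / 2) * stdPhi ((a + b * t - x) / √t))) t := by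
    convert hasDerivAt_passagePrimitive hb.ne (a - x) ht using 4
    ring
  have hnonneg (t : ℝ) (ht : t ∈ Ioi 0) :
      0 ≤ t * ((a - x) * t ^ (-(3:ℝ) / 2) * stdPhi ((a + b * t - x) / √t)) :=
    mul_nonneg (le_of_lt ht) (mul_nonneg (mul_nonneg hc.le (rpow_nonneg (le_of_lt ht) _))
      (stdPhi_nonneg _))
  rw [integral_Ioi_of_hasDerivAt_of_nonneg_of_tendsto_nhdsGT
    (tendsto_passagePrimitive_nhdsGT_zero b hc) hderiv hnonneg
    (tendsto_passagePrimitive_atTop hb _),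
    abs_of_neg hb, div_neg, zero_sub]
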